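/- Let (x, y) ∈ ℝ² and let N = {(x−1/2, y+1), (x+1/2, y+1), (x+1, y), (x+1/2, y−1), (x−1/2, y−1), (x−1, y)} be the six centres of the hexagonal irregular cell gadget. If p and p' are points of the convex hull of N satisfying ‖p − q‖₂ ≥ 63/64 and ‖p' − q‖₂ ≥ 63/64 for every q ∈ N, then ‖p − p'‖₂ < 1; in fact ‖p − p'‖₂ ≤ 0.31. In particular, the interior hole of this irregular cell gadget admits at most one centre of a pairwise-disjoint family of open disks of radius 1/2. -/
import Mathlib


/-- Euclidean distance in the plane `ℝ × ℝ`. -/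
noncomputable def edist2 (p q : ℝ × ℝ) : ℝ :=
  Real.sqrt ((p.1 - q.1) ^ 2 + (p.2 - q.2) ^ 2)

/-- Open Euclidean disk of radius `r` centred at `c`. -/
def odisk (r : ℝ) (c : ℝ × ℝ) : Set (ℝ × ℝ) := {p : ℝ × ℝ | edist2 p c < r}

/-- The six centres of the hexagonal irregular cell gadget around `(x, y)`. -/
def hex6 (x y : ℝ) : Set (ℝ × ℝ) :=
  {(x - 1 / 2, y + 1), (x + 1 / 2, y + 1), (x + 1, y),
   (x + 1 / 2, y - 1), (x - 1 / 2, y - 1), (x - 1, y)}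

/-- The interior hole of the hexagonal irregular cell gadget. -/
def holeHex (x y : ℝ) : Set (ℝ × ℝ) :=
  convexHull ℝ (hex6 x y) \ ⋃ q ∈ hex6 x y, odisk (63 / 64) q

lemma edist2_sq {p q : ℝ × ℝ} (h : 63 / 64 ≤ edist2 p q) :
    (63 / 64 : ℝ) ^ 2 ≤ (p.1 - q.1) ^ 2 + (p.2 - q.2) ^ 2 := by
  have h0 : (0:ℝ) ≤ (p.1 - q.1) ^ 2 + (p.2 - q.2) ^ 2 := by positivity
  calc (63/64:ℝ)^2 ≤ (edist2 p q)^2 := by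
        apply pow_le_pow_left₀ (by norm_num) h
    _ = _ := Real.sq_sqrt h0

lemma hull_box {x y : ℝ} {p : ℝ × ℝ} (hp : p ∈ convexHull ℝ (hex6 x y)) :
    p.1 ∈ Set.Icc (x - 1) (x + 1) ∧ p.2 ∈ Set.Icc (y - 1) (y + 1) := by
  have hsub : convexHull ℝ (hex6 x y) ⊆ Set.Icc (x-1) (x+1) ×ˢ Set.Icc (y-1) (y+1) := by
    apply convexHull_min
    · intro q hq
      rcases hq with rfl | rfl | rfl | rfl | rfl | rfl <;>
        constructor <;> constructor <;> dsimp <;> linarith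
    · exact (convex_Icc _ _).prod (convex_Icc _ _)
  exact hsub hp

lemma vbound {u v : ℝ} (h : (63/64:ℝ)^2 ≤ (u-1/2)^2 + (v-1)^2)
    (hu0 : 0 ≤ u) (hu1 : u ≤ 1) (hv1 : v ≤ 1) : v ≤ 1521/10000 := by
  by_contra hc
  push_neg at hc
  nlinarith [mul_nonneg hu0 (by linarith : (0:ℝ) ≤ 1-u),
    mul_nonneg (by linarith : (0:ℝ) ≤ 1-v) (by linarith : (0:ℝ) ≤ 8479/10000 - (1-v))]

lemma ubound {u v : ℝ} (h : (63/64:ℝ)^2 ≤ (u-1)^2 + v^2)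
    (hu1 : u ≤ 1) (hv : v^2 ≤ (1521/10000:ℝ)^2) : u ≤ 2745/100000 := by
  by_contra hc
  push_neg at hc
  nlinarith [mul_nonneg (by linarith : (0:ℝ) ≤ 1-u)
    (by linarith : (0:ℝ) ≤ 97255/100000 - (1-u))]

lemma key_box {x y : ℝ} {p : ℝ × ℝ} (hp : p ∈ convexHull ℝ (hex6 x y))
    (hd : ∀ q ∈ hex6 x y, 63 / 64 ≤ edist2 p q) :
    |p.1 - x| ≤ 2745 / 100000 ∧ |p.2 - y| ≤ 1521 / 10000 := by
  obtain ⟨⟨hx1, hx2⟩, ⟨hy1, hy2⟩⟩ := hull_box hp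
  have h1 := edist2_sq (hd (x - 1/2, y + 1) (by simp [hex6]))
  have h2 := edist2_sq (hd (x + 1/2, y + 1) (by simp [hex6]))
  have h3 := edist2_sq (hd (x + 1, y) (by simp [hex6]))
  have h4 := edist2_sq (hd (x + 1/2, y - 1) (by simp [hex6]))
  have h5 := edist2_sq (hd (x - 1/2, y - 1) (by simp [hex6]))
  have h6 := edist2_sq (hd (x - 1, y) (by simp [hex6]))
  simp only at h1 h2 h3 h4 h5 h6
  have hv : |p.2 - y| ≤ 1521 / 10000 := by
    rw [abs_le]
    constructor
    · rcases le_or_gt x p.1 with hu | hu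
      · have := vbound (u := p.1 - x) (v := y - p.2) (by linarith [h4])
          (by linarith) (by linarith) (by linarith)
        linarith
      · have := vbound (u := x - p.1) (v := y - p.2) (by linarith [h5])
          (by linarith) (by linarith) (by linarith)
        linarith
    · rcases le_or_gt x p.1 with hu | hu
      · exact vbound (u := p.1 - x) (v := p.2 - y) (by linarith [h2])
          (by linarith) (by linarith) (by linarith)
      · exact vbound (u := x - p.1) (v := p.2 - y) (by linarith [h1])
          (by linarith) (by linarith) (by linarith)
  refine ⟨?_, hv⟩
  have hvsq : (p.2 - y) ^ 2 ≤ (1521 / 10000 : ℝ) ^ 2 :=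
    sq_le_sq' (abs_le.1 hv).1 (abs_le.1 hv).2
  rw [abs_le]
  constructor
  · have := ubound (u := x - p.1) (v := p.2 - y) (by linarith [h6]) (by linarith) hvsq
    linarith
  · exact ubound (u := p.1 - x) (v := p.2 - y) (by linarith [h3]) (by linarith) hvsq

/-- Any two points of the convex hull of the hexagonal gadget centres `N` that are
at Euclidean distance `≥ 63/64` from every point of `N` are at distance `≤ 0.31 < 1` from each
other; in particular the interior hole of this irregular cell gadget contains at most one centre
of any pairwise-disjoint family of open disks of radius `1/2`. -/
theorem irregular_cell_gadget_hole_one_disk (x y : ℝ) :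
    (∀ p p' : ℝ × ℝ, p ∈ convexHull ℝ (hex6 x y) → p' ∈ convexHull ℝ (hex6 x y) →
      (∀ q ∈ hex6 x y, 63 / 64 ≤ edist2 p q) → (∀ q ∈ hex6 x y, 63 / 64 ≤ edist2 p' q) →
      edist2 p p' ≤ 31 / 100 ∧ edist2 p p' < 1) ∧
    (∀ (ι : Type) (ctr : ι → ℝ × ℝ),
      (Pairwise fun i j => Disjoint (odisk (1 / 2) (ctr i)) (odisk (1 / 2) (ctr j))) →
      ∀ i j : ι, ctr i ∈ holeHex x y → ctr j ∈ holeHex x y → i = j) := by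
  have main : ∀ p p' : ℝ × ℝ, p ∈ convexHull ℝ (hex6 x y) → p' ∈ convexHull ℝ (hex6 x y) →
      (∀ q ∈ hex6 x y, 63 / 64 ≤ edist2 p q) → (∀ q ∈ hex6 x y, 63 / 64 ≤ edist2 p' q) →
      edist2 p p' ≤ 31 / 100 ∧ edist2 p p' < 1 := by
    intro p p' hp hp' hdp hdp'
    obtain ⟨hu, hv⟩ := key_box hp hdp
    obtain ⟨hu', hv'⟩ := key_box hp' hdp'
    rw [abs_le] at hu hv hu' hv'
    have hsum : (p.1 - p'.1) ^ 2 + (p.2 - p'.2) ^ 2 ≤ (31 / 100 : ℝ) ^ 2 := by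
      have e1 : (p.1 - p'.1) ^ 2 ≤ (549 / 10000 : ℝ) ^ 2 :=
        sq_le_sq' (by linarith [hu.1, hu'.2]) (by linarith [hu.2, hu'.1])
      have e2 : (p.2 - p'.2) ^ 2 ≤ (3042 / 10000 : ℝ) ^ 2 :=
        sq_le_sq' (by linarith [hv.1, hv'.2]) (by linarith [hv.2, hv'.1])
      nlinarith [e1, e2]
    have hle : edist2 p p' ≤ 31 / 100 := by
      have := Real.sqrt_le_sqrt hsum
      rwa [Real.sqrt_sq (by norm_num)] at this
    exact ⟨hle, lt_of_le_of_lt hle (by norm_num)⟩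
  refine ⟨main, ?_⟩
  intro ι ctr hpw i j hi hj
  by_contra hne
  obtain ⟨hhi, hni⟩ := hi
  obtain ⟨hhj, hnj⟩ := hj
  have hdi : ∀ q ∈ hex6 x y, 63 / 64 ≤ edist2 (ctr i) q := by
    intro q hq
    by_contra hlt
    push_neg at hlt
    exact hni (Set.mem_biUnion hq hlt)
  have hdj : ∀ q ∈ hex6 x y, 63 / 64 ≤ edist2 (ctr j) q := by
    intro q hq
    by_contra hlt
    push_neg at hlt
    exact hnj (Set.mem_biUnion hq hlt)
  have hlt1 := (main (ctr i) (ctr j) hhi hhj hdi hdj).2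
  have hD : ((ctr i).1 - (ctr j).1) ^ 2 + ((ctr i).2 - (ctr j).2) ^ 2 < 1 := by
    rw [edist2] at hlt1
    have := (Real.sqrt_lt' (x := ((ctr i).1 - (ctr j).1) ^ 2 + ((ctr i).2 - (ctr j).2) ^ 2)
      (y := 1) one_pos).mp hlt1
    linarith [this]
  set m : ℝ × ℝ := (((ctr i).1 + (ctr j).1) / 2, ((ctr i).2 + (ctr j).2) / 2) with hm
  have hmi : m ∈ odisk (1/2) (ctr i) := by
    show edist2 m (ctr i) < 1/2
    rw [edist2, show ((1:ℝ)/2) = Real.sqrt ((1/2)^2) by rw [Real.sqrt_sq]; norm_num]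
    apply Real.sqrt_lt_sqrt (by positivity)
    simp only [hm]
    nlinarith [hD]
  have hmj : m ∈ odisk (1/2) (ctr j) := by
    show edist2 m (ctr j) < 1/2
    rw [edist2, show ((1:ℝ)/2) = Real.sqrt ((1/2)^2) by rw [Real.sqrt_sq]; norm_num]
    apply Real.sqrt_lt_sqrt (by positivity)
    simp only [hm]
    nlinarith [hD]
  exact Set.disjoint_left.mp (hpw hne) hmi hmj
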